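/- Let β > 0, J > 0 with βJ > 1/2, and let ψ(m) = (βJ/2)m² + 1 + log((√((1+m)/2)+√((1−m)/2))²) on [−1,1]. Then m = 0 is a critical point of ψ but not a local maximum, and ψ attains its global maximum exactly at the two points ±m*, where m* ∈ (0,1) satisfies √(1−m*²) = (1/2)(√(4/(βJ)+1) − 1). -/

import Mathlib

/-!
For `m ∈ [-1, 1]` one has `(√((1+m)/2) + √((1-m)/2))² = 1 + √(1-m²)`, so in the variable
`u = √(1-m²) ∈ [0, 1]` the function `ψ` is `1 + c/2 (1-u²) + log (1+u)` with `c = βJ`.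
The tangent-line bound `log x ≤ x - 1` shows that this profile has a unique maximiser on
`(-1, ∞)`, the positive root `v` of `c v (1+v) = 1`, and `v < 1` exactly when `c > 1/2`.
Hence `ψ` is maximal precisely where `√(1-m²) = v`. Near `u = 1`, i.e. `m = 0`, the same bound
shows that the profile increases as `u` decreases, so `0` is not a local maximum; being even,
`ψ` has derivative `0` there.
-/

/-- The tilting function `ψ(m) = (βJ/2)m² + s(m,1)` for the Curie–Weiss interaction on
the orthoplicial model. -/
noncomputable def psiCW (β J m : ℝ) : ℝ :=
  (β * J / 2) * m ^ 2 + 1 + Real.log ((Real.sqrt ((1 + m)/2) + Real.sqrt ((1 - m)/2)) ^ 2)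

open Real Set Filter Topology

lemma hasDerivAt_zero_of_even {f : ℝ → ℝ} (heven : ∀ x, f (-x) = f x)
    (hf : DifferentiableAt ℝ f 0) : HasDerivAt f 0 0 := by
  have h := deriv_comp_neg (f := f) (x := 0)
  simp only [heven, neg_zero] at h
  simpa [show deriv f 0 = 0 by linarith] using hf.hasDerivAt

lemma setOf_forall_le_eq {α β : Type*} [LinearOrder β] {f : α → β} {s t : Set α} {M : β}
    (hts : t ⊆ s) (ht : t.Nonempty) (hM : ∀ x ∈ t, f x = M)
    (hlt : ∀ x ∈ s, x ∉ t → f x < M) :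
    {x | x ∈ s ∧ ∀ y ∈ s, f y ≤ f x} = t := by
  ext x
  constructor
  · rintro ⟨hx, hmax⟩
    by_contra hxt
    obtain ⟨a, ha⟩ := ht
    exact (hlt x hx hxt).not_ge (hM a ha ▸ hmax a (hts ha))
  · intro hx
    refine ⟨hts hx, fun y hy => ?_⟩
    rw [hM x hx]
    by_cases hyt : y ∈ t
    · exact (hM y hyt).le
    · exact (hlt y hy hyt).le

lemma sqrt_one_sub_sq_eq_iff {x v : ℝ} (hx : x ∈ Icc (-1) 1) (hv0 : 0 ≤ v) (hv1 : v ≤ 1) :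
    √(1 - x ^ 2) = v ↔ x = √(1 - v ^ 2) ∨ x = -√(1 - v ^ 2) := by
  have hx2 : 0 ≤ 1 - x ^ 2 := by nlinarith [hx.1, hx.2]
  rw [sqrt_eq_iff_eq_sq hx2 hv0, ← sq_eq_sq_iff_eq_or_eq_neg, sq_sqrt (by nlinarith)]
  constructor <;> intro <;> linarith

lemma sqrt_half_add_sqrt_half_sq {m : ℝ} (hm : m ∈ Icc (-1) 1) :
    (√((1 + m) / 2) + √((1 - m) / 2)) ^ 2 = 1 + √(1 - m ^ 2) := by
  have hp : 0 ≤ (1 + m) / 2 := by linarith [hm.1]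
  have hq : 0 ≤ (1 - m) / 2 := by linarith [hm.2]
  have hpq : (1 + m) / 2 * ((1 - m) / 2) = (1 - m ^ 2) / 4 := by ring
  rw [add_sq, sq_sqrt hp, sq_sqrt hq, mul_assoc, ← sqrt_mul hp, hpq,
    sqrt_div' _ (by norm_num : (0:ℝ) ≤ 4),
    show √(4:ℝ) = 2 by rw [show (4:ℝ) = 2 ^ 2 by norm_num, sqrt_sq (by norm_num)]]
  ring

noncomputable def cwProfile (c u : ℝ) : ℝ := c / 2 * (1 - u ^ 2) + log (1 + u)

lemma psiCW_eq_cwProfile (β J : ℝ) {m : ℝ} (hm : m ∈ Icc (-1) 1) :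
    psiCW β J m = cwProfile (β * J) √(1 - m ^ 2) + 1 := by
  rw [psiCW, cwProfile, sqrt_half_add_sqrt_half_sq hm, sq_sqrt (by nlinarith [hm.1, hm.2])]
  ring

lemma psiCW_neg (β J m : ℝ) : psiCW β J (-m) = psiCW β J m := by
  simp only [psiCW, neg_sq, ← sub_eq_add_neg, sub_neg_eq_add, add_comm √((1 - m) / 2)]

lemma psiCW_hasDerivAt_zero (β J : ℝ) : HasDerivAt (psiCW β J) 0 0 :=
  hasDerivAt_zero_of_even (psiCW_neg β J) (by unfold psiCW; fun_prop (disch := norm_num))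

lemma cwProfile_lt_of_ne {c u v : ℝ} (hc : 0 ≤ c) (hu : -1 < u) (hv : -1 < v)
    (hvc : c * v * (1 + v) = 1) (huv : u ≠ v) : cwProfile c u < cwProfile c v := by
  have hratio : (1 + u) / (1 + v) ≠ 1 := by
    rw [Ne, div_eq_one_iff_eq (by linarith)]
    exact fun h => huv (by linarith)
  have hlog := log_lt_sub_one_of_pos (by apply div_pos <;> linarith) hratio
  rw [log_div (by linarith) (by linarith),
    show (1 + u) / (1 + v) - 1 = c * v * (u - v) by
      rw [div_sub_one (by linarith), div_eq_iff (by linarith)]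
      linear_combination (v - u) * hvc] at hlog
  unfold cwProfile
  nlinarith [mul_nonneg hc (sq_nonneg (u - v))]

lemma cwProfile_one_lt {c u : ℝ} (hu : -1 < u) (hu1 : u < 1) (h : 2 < c * (1 + u) ^ 2) :
    cwProfile c 1 < cwProfile c u := by
  have hlog := log_le_sub_one_of_pos (x := 2 / (1 + u)) (by apply div_pos <;> linarith)
  rw [log_div two_ne_zero (by linarith),
    show 2 / (1 + u) - 1 = (1 - u) / (1 + u) by rw [div_sub_one (by linarith)]; ring] at hlog
  have hdiv : (1 - u) / (1 + u) < c / 2 * (1 - u ^ 2) := by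
    rw [div_lt_iff₀ (by linarith)]
    nlinarith [mul_lt_mul_of_pos_left h (by linarith : 0 < 1 - u)]
  calc cwProfile c 1 = log 2 := by norm_num [cwProfile]
    _ < cwProfile c u := by unfold cwProfile; linarith

lemma not_isLocalMaxOn_psiCW_zero {β J : ℝ} (h : 1 / 2 < β * J) :
    ¬ IsLocalMaxOn (psiCW β J) (Icc (-1) 1) 0 := by
  have hIcc : Icc (-1 : ℝ) 1 ∈ 𝓝 0 := Icc_mem_nhds (by norm_num) (by norm_num)
  have hlarge : ∀ᶠ m in 𝓝 (0 : ℝ), 2 < β * J * (1 + √(1 - m ^ 2)) ^ 2 := by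
    refine Tendsto.eventually_const_lt (v := β * J * (1 + √(1 - 0 ^ 2)) ^ 2) ?_ ?_
    · rw [zero_pow two_ne_zero, sub_zero, sqrt_one]; linarith
    · exact Continuous.tendsto (by fun_prop) 0
  have hgt : ∀ᶠ m in 𝓝[>] (0 : ℝ), psiCW β J 0 < psiCW β J m := by
    filter_upwards [nhdsWithin_le_nhds hIcc, nhdsWithin_le_nhds hlarge, self_mem_nhdsWithin]
      with m hm hm_large (hm_pos : 0 < m)
    rw [psiCW_eq_cwProfile β J hm, psiCW_eq_cwProfile β J (by norm_num), zero_pow two_ne_zero,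
      sub_zero, sqrt_one, add_lt_add_iff_right]
    refine cwProfile_one_lt (by linarith [sqrt_nonneg (1 - m ^ 2)]) ?_ hm_large
    rw [sqrt_lt' one_pos]
    nlinarith
  intro hmax
  obtain ⟨m, hle, hlt⟩ :=
    (((hmax.isLocalMax hIcc).filter_mono nhdsWithin_le_nhds).and hgt).exists
  exact hle.not_gt hlt

noncomputable def cwCritical (c : ℝ) : ℝ := (1 / 2) * (√(4 / c + 1) - 1)

lemma mul_cwCritical_mul_one_add {c : ℝ} (hc : 0 < c) :
    c * cwCritical c * (1 + cwCritical c) = 1 := by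
  have hs := sq_sqrt (by positivity : 0 ≤ 4 / c + 1)
  have hc4 : c * (4 / c) = 4 := mul_div_cancel₀ 4 hc.ne'
  unfold cwCritical
  linear_combination c / 4 * hs + hc4 / 4

lemma cwCritical_pos {c : ℝ} (hc : 0 < c) : 0 < cwCritical c := by
  have : 1 < √(4 / c + 1) := by
    rw [lt_sqrt zero_le_one]
    linarith [div_pos four_pos hc]
  unfold cwCritical
  linarith

lemma cwCritical_lt_one {c : ℝ} (h : 1 / 2 < c) : cwCritical c < 1 := by
  have : √(4 / c + 1) < 3 := by
    rw [sqrt_lt' three_pos, ← lt_sub_iff_add_lt, div_lt_iff₀ (by linarith)]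
    linarith
  unfold cwCritical
  linarith

theorem psiCW_supercritical_maximizers_general (β J : ℝ)
    (h : 1/2 < β * J) :
    HasDerivAt (psiCW β J) 0 0 ∧
    ¬ IsLocalMaxOn (psiCW β J) (Set.Icc (-1:ℝ) 1) 0 ∧
    ∃ mstar : ℝ, mstar ∈ Set.Ioo (0:ℝ) 1 ∧
      Real.sqrt (1 - mstar ^ 2) = (1/2) * (Real.sqrt (4/(β * J) + 1) - 1) ∧
      {x | x ∈ Set.Icc (-1:ℝ) 1 ∧ ∀ y ∈ Set.Icc (-1:ℝ) 1, psiCW β J y ≤ psiCW β J x} =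
        {mstar, -mstar} := by
  have hc : 0 < β * J := by linarith
  set v := cwCritical (β * J)
  have hv0 : 0 < v := cwCritical_pos hc
  have hv1 : v < 1 := cwCritical_lt_one h
  set mstar := √(1 - v ^ 2)
  have hmstar : mstar ∈ Ioo 0 1 :=
    ⟨sqrt_pos.2 (by nlinarith), (sqrt_lt' one_pos).2 (by nlinarith)⟩
  have hmaximizer : ∀ x ∈ Icc (-1) 1, √(1 - x ^ 2) = v ↔ x ∈ ({mstar, -mstar} : Set ℝ) :=
    fun x hx => sqrt_one_sub_sq_eq_iff hx hv0.le hv1.le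
  have hpair : ({mstar, -mstar} : Set ℝ) ⊆ Icc (-1) 1 := by
    rintro x (rfl | rfl) <;> constructor <;> linarith [hmstar.1, hmstar.2]
  refine ⟨psiCW_hasDerivAt_zero β J, not_isLocalMaxOn_psiCW_zero h, mstar, hmstar,
    (hmaximizer mstar (hpair (by simp))).2 (by simp), ?_⟩
  refine setOf_forall_le_eq hpair (insert_nonempty _ _) (M := cwProfile (β * J) v + 1) ?_ ?_
  · intro x hx
    rw [psiCW_eq_cwProfile β J (hpair hx), (hmaximizer x (hpair hx)).2 hx]
  · intro x hx hxt
    rw [psiCW_eq_cwProfile β J hx, add_lt_add_iff_right]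
    exact cwProfile_lt_of_ne hc.le (by linarith [sqrt_nonneg (1 - x ^ 2)]) (by linarith)
      (mul_cwCritical_mul_one_add hc) (mt (hmaximizer x hx).1 hxt)

/-- In the supercritical regime `βJ > 1/2`: `m = 0` is a critical point of `ψ` but not a
local maximum on `[-1,1]`, and `ψ` attains its global maximum on `[-1,1]` exactly at the
two symmetric points `±m*`, where `m* ∈ (0,1)` satisfies
`√(1−m*²) = (1/2)(√(4/(βJ)+1) − 1)`. -/
theorem psiCW_supercritical_maximizers (β J : ℝ) (hβ : 0 < β) (hJ : 0 < J)
    (h : 1/2 < β * J) :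
    HasDerivAt (psiCW β J) 0 0 ∧
    ¬ IsLocalMaxOn (psiCW β J) (Set.Icc (-1:ℝ) 1) 0 ∧
    ∃ mstar : ℝ, mstar ∈ Set.Ioo (0:ℝ) 1 ∧
      Real.sqrt (1 - mstar ^ 2) = (1/2) * (Real.sqrt (4/(β * J) + 1) - 1) ∧
      {x | x ∈ Set.Icc (-1:ℝ) 1 ∧ ∀ y ∈ Set.Icc (-1:ℝ) 1, psiCW β J y ≤ psiCW β J x} =
        {mstar, -mstar} :=
  psiCW_supercritical_maximizers_general β J h
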